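/- arXiv:1703.03268 — 8 statements merged into one kernel-verified Lean document; each statement's English description precedes it below -/
import Mathlib

section
/- Let f be a nonnegative signed dominating function of a finite simple connected graph G of order n, let P = {v ∈ V : f(v) = 1}, M = {v ∈ V : f(v) = −1}, and let n_e be the number of vertices of G of even degree. Then ∑_{v ∈ P} deg_G(v) ≥ n + n_e − 2|P| + ∑_{v ∈ M} deg_G(v). -/
open Finset

/-- The closed neighborhood of `v` in `G`, as a `Finset`. -/
def closedNbr {V : Type*} [Fintype V] [DecidableEq V] (G : SimpleGraph V) [DecidableRel G.Adj]
    (v : V) : Finset V := insert v (G.neighborFinset v)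

/-- `f` is a nonnegative signed dominating function of `G`:
`f : V → {-1, 1}` and `∑_{u ∈ N[v]} f(u) ≥ 0` for every vertex `v`. -/
def IsNNSDF {V : Type*} [Fintype V] [DecidableEq V] (G : SimpleGraph V) [DecidableRel G.Adj]
    (f : V → ℤ) : Prop :=
  (∀ v, f v = 1 ∨ f v = -1) ∧ ∀ v, 0 ≤ ∑ u ∈ closedNbr G v, f u

/-- The nonnegative signed domination number `γ^NN_s(G)`. -/
noncomputable def gammaNNs {V : Type*} [Fintype V] [DecidableEq V] (G : SimpleGraph V)
    [DecidableRel G.Adj] : ℤ :=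
  sInf {w : ℤ | ∃ f : V → ℤ, IsNNSDF G f ∧ w = ∑ v, f v}

/-- For an NNSDF `f` of a finite simple connected graph `G` of order `n`, with
`P = {v : f v = 1}`, `M = {v : f v = -1}` and `n_e` the number of even-degree vertices,
`∑_{v ∈ P} deg(v) ≥ n + n_e - 2|P| + ∑_{v ∈ M} deg(v)`. -/
theorem lemma_sum_degrees_P {V : Type*} [Fintype V] [DecidableEq V]
    (G : SimpleGraph V) [DecidableRel G.Adj] (hconn : G.Connected)
    (f : V → ℤ) (hf : IsNNSDF G f)
    (P M : Finset V) (hP : P = univ.filter fun v => f v = 1)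
    (hM : M = univ.filter fun v => f v = -1)
    (n nₑ : ℕ) (hn : n = Fintype.card V)
    (hne : nₑ = (univ.filter fun v => Even (G.degree v)).card) :
    (n : ℤ) + nₑ - 2 * P.card + ∑ v ∈ M, (G.degree v : ℤ) ≤ ∑ v ∈ P, (G.degree v : ℤ) := by
  obtain ⟨hf1, hf2⟩ := hf
  have hcard : ∀ v, (closedNbr G v).card = G.degree v + 1 := by
    intro v
    rw [closedNbr, card_insert_of_notMem (SimpleGraph.notMem_neighborFinset_self G v),
      SimpleGraph.card_neighborFinset_eq_degree]
  have hmem : ∀ u v : V, u ∈ closedNbr G v ↔ v ∈ closedNbr G u := by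
    intro u v
    simp only [closedNbr, mem_insert, SimpleGraph.mem_neighborFinset]
    constructor
    · rintro (h | h); exacts [Or.inl h.symm, Or.inr h.symm]
    · rintro (h | h); exacts [Or.inl h.symm, Or.inr h.symm]
  -- Step B : double counting
  have hB : (∑ v, ∑ u ∈ closedNbr G v, f u) = ∑ u, f u * ((G.degree u : ℤ) + 1) := by
    calc ∑ v, ∑ u ∈ closedNbr G v, f u
        = ∑ v, ∑ u, if u ∈ closedNbr G v then f u else 0 := by
          refine Finset.sum_congr rfl fun v _ => ?_
          rw [Finset.sum_ite_mem, univ_inter]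
      _ = ∑ u, ∑ v, if u ∈ closedNbr G v then f u else 0 := Finset.sum_comm
      _ = ∑ u, ∑ v, if v ∈ closedNbr G u then f u else 0 := by
          refine Finset.sum_congr rfl fun u _ => Finset.sum_congr rfl fun v _ => ?_
          simp only [hmem u v]
      _ = ∑ u, f u * ((G.degree u : ℤ) + 1) := by
          refine Finset.sum_congr rfl fun u _ => ?_
          rw [Finset.sum_ite_mem, univ_inter, Finset.sum_const, hcard, mul_comm]
          push_cast
          ring
  -- Step A : lower bound by nₑ
  have hA : (nₑ : ℤ) ≤ ∑ v, ∑ u ∈ closedNbr G v, f u := by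
    have key : ∀ v, (if Even (G.degree v) then (1 : ℤ) else 0) ≤ ∑ u ∈ closedNbr G v, f u := by
      intro v
      by_cases he : Even (G.degree v)
      · simp only [he, if_true]
        have h2 : ∀ u ∈ closedNbr G v, f u % 2 = 1 := by
          intro u _; rcases hf1 u with h | h <;> simp [h]
        have hmod : (∑ u ∈ closedNbr G v, f u) % 2 = 1 := by
          rw [Finset.sum_int_mod, Finset.sum_congr rfl h2, Finset.sum_const, hcard]
          obtain ⟨k, hk⟩ := he
          simp [hk]
          omega
        have := hf2 v
        omega
      · simp only [he, if_false]; exact hf2 v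
    calc (nₑ : ℤ) = ∑ v, (if Even (G.degree v) then (1 : ℤ) else 0) := by
          rw [hne, Finset.sum_boole]
      _ ≤ _ := Finset.sum_le_sum fun v _ => key v
  -- Step C : split according to P and M
  have hnotP : ∀ v, ¬ f v = 1 ↔ f v = -1 := by
    intro v; rcases hf1 v with h | h <;> simp [h]
  have hsplit : (∑ u, f u * ((G.degree u : ℤ) + 1))
      = (∑ u ∈ P, ((G.degree u : ℤ) + 1)) - ∑ u ∈ M, ((G.degree u : ℤ) + 1) := by
    rw [← Finset.sum_filter_add_sum_filter_not univ (fun v => f v = 1)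
      (fun u => f u * ((G.degree u : ℤ) + 1)), hP, hM]
    have e1 : ∀ u ∈ univ.filter fun v => f v = 1, f u * ((G.degree u : ℤ) + 1)
        = (G.degree u : ℤ) + 1 := by
      intro u hu; rw [mem_filter] at hu; rw [hu.2, one_mul]
    have e2 : ∀ u ∈ univ.filter fun v => ¬ f v = 1, f u * ((G.degree u : ℤ) + 1)
        = -((G.degree u : ℤ) + 1) := by
      intro u hu; rw [mem_filter] at hu
      rw [(hnotP u).mp hu.2]; ring
    have hMeq : (univ.filter fun v => ¬ f v = 1) = univ.filter fun v => f v = -1 := by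
      ext u; simp [hnotP u]
    rw [Finset.sum_congr rfl e1, Finset.sum_congr rfl e2, Finset.sum_neg_distrib, hMeq]
    ring
  -- Step D : |P| + |M| = n
  have hD : P.card + M.card = n := by
    rw [hP, hM, hn]
    have := Finset.card_filter_add_card_filter_not (s := univ)
      (p := fun v => f v = 1)
    have hMeq : (univ.filter fun a => ¬ f a = 1) = univ.filter fun v => f v = -1 := by
      ext u; simp [hnotP u]
    rw [hMeq] at this
    rw [this, Fintype.card]
  have hPsum : (∑ u ∈ P, ((G.degree u : ℤ) + 1)) = (∑ u ∈ P, (G.degree u : ℤ)) + P.card := by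
    rw [Finset.sum_add_distrib, Finset.sum_const]; push_cast; ring
  have hMsum : (∑ u ∈ M, ((G.degree u : ℤ) + 1)) = (∑ u ∈ M, (G.degree u : ℤ)) + M.card := by
    rw [Finset.sum_add_distrib, Finset.sum_const]; push_cast; ring
  rw [hB, hsplit, hPsum, hMsum] at hA
  have : (P.card : ℤ) + M.card = n := by exact_mod_cast hD
  linarith
end

section
/- Let G be a finite simple connected graph of order n, with minimum degree δ, maximum degree Δ, and n_e vertices of even degree. Then γ^NN_s(G) ≥ (nδ − nΔ + 2n_e)/(Δ + δ + 2). -/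
open Finset

lemma closedNbr_card {V : Type*} [Fintype V] [DecidableEq V] (G : SimpleGraph V)
    [DecidableRel G.Adj] (v : V) : (closedNbr G v).card = G.degree v + 1 := by
  rw [closedNbr, card_insert_of_notMem (by simp), G.card_neighborFinset_eq_degree]

lemma nnsdf_key {V : Type*} [Fintype V] [DecidableEq V] (G : SimpleGraph V)
    [DecidableRel G.Adj] (f : V → ℤ) (hf : IsNNSDF G f) :
    (Fintype.card V : ℤ) * G.minDegree - (Fintype.card V : ℤ) * G.maxDegree
      + 2 * ((univ.filter fun v => Even (G.degree v)).card : ℤ)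
    ≤ (∑ v, f v) * ((G.maxDegree : ℤ) + G.minDegree + 2) := by
  obtain ⟨hf1, hf2⟩ := hf
  have hmem : ∀ u v : V, u ∈ closedNbr G v ↔ v ∈ closedNbr G u := by
    intro u v
    simp only [closedNbr, mem_insert, SimpleGraph.mem_neighborFinset]
    rw [G.adj_comm, eq_comm]
  -- double counting
  have hdc : ∑ v, ∑ u ∈ closedNbr G v, f u = ∑ u, ((G.degree u : ℤ) + 1) * f u := by
    calc ∑ v, ∑ u ∈ closedNbr G v, f u
        = ∑ v, ∑ u, if u ∈ closedNbr G v then f u else 0 := by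
          refine Finset.sum_congr rfl fun v _ => ?_
          rw [Finset.sum_ite_mem, univ_inter]
      _ = ∑ u, ∑ v, if u ∈ closedNbr G v then f u else 0 := Finset.sum_comm
      _ = ∑ u, ∑ v, if v ∈ closedNbr G u then f u else 0 := by
          exact Finset.sum_congr rfl fun u _ => Finset.sum_congr rfl fun v _ => by simp only [hmem]
      _ = ∑ u, ((G.degree u : ℤ) + 1) * f u := by
          refine Finset.sum_congr rfl fun u _ => ?_
          rw [Finset.sum_ite_mem, univ_inter, Finset.sum_const, closedNbr_card]
          push_cast [nsmul_eq_mul]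
          ring
  -- parity: even-degree vertices contribute at least 1
  have hodd : ∀ v : V, Even (G.degree v) → 1 ≤ ∑ u ∈ closedNbr G v, f u := by
    intro v hv
    have h0 := hf2 v
    have hm : (∑ u ∈ closedNbr G v, f u) % 2 = 1 := by
      rw [Finset.sum_int_mod]
      have h1 : ∀ u ∈ closedNbr G v, f u % 2 = 1 := fun u _ => by
        rcases hf1 u with h | h <;> simp [h]
      rw [Finset.sum_congr rfl h1, Finset.sum_const, closedNbr_card, nsmul_eq_mul, mul_one]
      obtain ⟨k, hk⟩ := hv
      omega
    omega
  -- lower bound for the double-counted sum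
  have hlow : ((univ.filter fun v => Even (G.degree v)).card : ℤ)
      ≤ ∑ v, ∑ u ∈ closedNbr G v, f u := by
    calc ((univ.filter fun v => Even (G.degree v)).card : ℤ)
        = ∑ v ∈ univ.filter fun v => Even (G.degree v), (1 : ℤ) := by
          rw [Finset.sum_const, nsmul_eq_mul, mul_one]
      _ ≤ ∑ v ∈ univ.filter fun v => Even (G.degree v), ∑ u ∈ closedNbr G v, f u :=
          Finset.sum_le_sum fun v hv => hodd v (by simpa using hv)
      _ ≤ ∑ v, ∑ u ∈ closedNbr G v, f u :=
          Finset.sum_le_sum_of_subset_of_nonneg (filter_subset _ _) fun v _ _ => hf2 v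
  -- upper bound via p and m
  set P := univ.filter fun u => f u = 1 with hP
  set M := univ.filter fun u => ¬ f u = 1 with hM
  have hpm : P.card + M.card = Fintype.card V := by
    simpa using Finset.card_filter_add_card_filter_not (s := univ) (fun u => f u = 1)
  have hw : ∑ v, f v = (P.card : ℤ) - M.card := by
    rw [← Finset.sum_filter_add_sum_filter_not univ (fun u => f u = 1) f, ← hP, ← hM]
    have e1 : ∑ u ∈ P, f u = (P.card : ℤ) := by
      rw [Finset.sum_congr rfl (fun u hu => (mem_filter.mp hu).2), Finset.sum_const,
        nsmul_eq_mul, mul_one]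
    have e2 : ∑ u ∈ M, f u = -(M.card : ℤ) := by
      have : ∀ u ∈ M, f u = -1 := fun u hu =>
        (hf1 u).resolve_left (mem_filter.mp hu).2
      rw [Finset.sum_congr rfl this, Finset.sum_const, nsmul_eq_mul]
      ring
    rw [e1, e2]; ring
  have hub : ∑ u, ((G.degree u : ℤ) + 1) * f u
      ≤ (P.card : ℤ) * (G.maxDegree + 1) - (M.card : ℤ) * (G.minDegree + 1) := by
    have : ∑ u, ((G.degree u : ℤ) + 1) * f u
        ≤ ∑ u, (if f u = 1 then ((G.maxDegree : ℤ) + 1) else -((G.minDegree : ℤ) + 1)) := by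
      refine Finset.sum_le_sum fun u _ => ?_
      have hd1 : (G.minDegree : ℤ) ≤ G.degree u := by
        exact_mod_cast G.minDegree_le_degree u
      have hd2 : (G.degree u : ℤ) ≤ G.maxDegree := by
        exact_mod_cast G.degree_le_maxDegree u
      rcases hf1 u with h | h <;> simp [h] <;> linarith
    refine this.trans_eq ?_
    rw [Finset.sum_ite, Finset.sum_const, Finset.sum_const, ← hP, ← hM,
      nsmul_eq_mul, nsmul_eq_mul]
    ring
  -- combine
  have hkey : ((univ.filter fun v => Even (G.degree v)).card : ℤ)
      ≤ (P.card : ℤ) * (G.maxDegree + 1) - (M.card : ℤ) * (G.minDegree + 1) := by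
    calc _ ≤ ∑ v, ∑ u ∈ closedNbr G v, f u := hlow
      _ = _ := hdc
      _ ≤ _ := hub
  have hn' : (Fintype.card V : ℤ) = (P.card : ℤ) + M.card := by exact_mod_cast hpm.symm
  rw [hw, hn']
  linarith [hkey]

/-- For a finite simple connected graph `G` of order `n`, minimum degree `δ`,
maximum degree `Δ` and `n_e` even-degree vertices,
`γ^NN_s(G) ≥ (nδ - nΔ + 2n_e)/(Δ + δ + 2)`. -/
theorem gammaNNs_lower_bound_1 {V : Type*} [Fintype V] [DecidableEq V]
    (G : SimpleGraph V) [DecidableRel G.Adj] (hconn : G.Connected)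
    (n nₑ δ Δ : ℕ) (hn : n = Fintype.card V)
    (hδ : δ = G.minDegree) (hΔ : Δ = G.maxDegree)
    (hne : nₑ = (univ.filter fun v => Even (G.degree v)).card) :
    ((n : ℝ) * δ - (n : ℝ) * Δ + 2 * nₑ) / ((Δ : ℝ) + δ + 2) ≤ (gammaNNs G : ℝ) := by
  set S : Set ℤ := {w : ℤ | ∃ f : V → ℤ, IsNNSDF G f ∧ w = ∑ v, f v} with hS
  have hSne : S.Nonempty := by
    refine ⟨∑ v : V, (1 : ℤ), fun _ => 1, ⟨fun v => Or.inl rfl, fun v => ?_⟩, rfl⟩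
    simp
  have hSbdd : BddBelow S := by
    refine ⟨-(Fintype.card V : ℤ), fun w hw => ?_⟩
    obtain ⟨f, ⟨hf1, _⟩, rfl⟩ := hw
    calc -(Fintype.card V : ℤ) = ∑ _v : V, (-1 : ℤ) := by simp
      _ ≤ ∑ v, f v := Finset.sum_le_sum fun v _ => by rcases hf1 v with h | h <;> simp [h]
  have hmem : gammaNNs G ∈ S := Int.csInf_mem hSne hSbdd
  obtain ⟨f, hf, hfeq⟩ := hmem
  have hkey := nnsdf_key G f hf
  rw [← hfeq] at hkey
  have hpos : (0 : ℝ) < (Δ : ℝ) + δ + 2 := by positivity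
  rw [div_le_iff₀ hpos]
  subst hn hδ hΔ hne
  have : ((Fintype.card V : ℝ) * G.minDegree - (Fintype.card V : ℝ) * G.maxDegree
      + 2 * ((univ.filter fun v => Even (G.degree v)).card : ℝ))
      ≤ (gammaNNs G : ℝ) * ((G.maxDegree : ℝ) + G.minDegree + 2) := by
    exact_mod_cast hkey
  linarith
end

section
/- Let G be a finite simple connected graph of order n and size m, with minimum degree δ and n_e vertices of even degree. Then γ^NN_s(G) ≥ (nδ + n_e − 2m)/(δ + 1). -/
open Finset

lemma mem_closedNbr_comm {V : Type*} [Fintype V] [DecidableEq V] (G : SimpleGraph V)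
    [DecidableRel G.Adj] (u v : V) : u ∈ closedNbr G v ↔ v ∈ closedNbr G u := by
  simp [closedNbr, SimpleGraph.adj_comm, eq_comm]

lemma key_ineq {V : Type*} [Fintype V] [DecidableEq V] (G : SimpleGraph V)
    [DecidableRel G.Adj] (f : V → ℤ) (hf : IsNNSDF G f) :
    (Fintype.card V : ℤ) * G.minDegree + (univ.filter fun v => Even (G.degree v)).card
      - 2 * G.edgeFinset.card ≤ (G.minDegree + 1) * ∑ v, f v := by
  classical
  set M : Finset V := univ.filter (fun v => f v = -1) with hM
  -- splitting lemma
  have split : ∀ g : V → ℤ, ∑ u, g u * f u = ∑ u, g u - 2 * ∑ u ∈ M, g u := by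
    intro g
    have h1 : ∀ u, g u * f u = g u - 2 * (if f u = -1 then g u else 0) := by
      intro u
      rcases hf.1 u with h | h <;> simp [h] <;> ring
    simp_rw [h1, Finset.sum_sub_distrib, ← Finset.mul_sum, Finset.sum_ite, Finset.sum_const_zero]
    simp [hM]
  -- parity: even degree vertices have inner sum ≥ 1
  have hone : ∀ v, Even (G.degree v) → 1 ≤ ∑ u ∈ closedNbr G v, f u := by
    intro v hv
    have hmod : (∑ u ∈ closedNbr G v, f u) % 2 = 1 := by
      rw [Finset.sum_int_mod]
      have h2 : ∀ u ∈ closedNbr G v, f u % 2 = 1 := by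
        intro u _
        rcases hf.1 u with h | h <;> simp [h]
      rw [Finset.sum_congr rfl h2, Finset.sum_const, closedNbr_card, nsmul_eq_mul, mul_one]
      obtain ⟨k, hk⟩ := hv
      omega
    have := hf.2 v
    omega
  -- total sum S
  have hS : ((univ.filter fun v => Even (G.degree v)).card : ℤ)
      ≤ ∑ v, ∑ u ∈ closedNbr G v, f u := by
    calc ((univ.filter fun v => Even (G.degree v)).card : ℤ)
        = ∑ v ∈ univ.filter (fun v => Even (G.degree v)), 1 := by simp
      _ ≤ ∑ v ∈ univ.filter (fun v => Even (G.degree v)), ∑ u ∈ closedNbr G v, f u := by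
          apply Finset.sum_le_sum
          intro v hv
          exact hone v (by simpa using hv)
      _ ≤ ∑ v, ∑ u ∈ closedNbr G v, f u := by
          apply Finset.sum_le_sum_of_subset_of_nonneg (Finset.filter_subset _ _)
          intro v _ _
          exact hf.2 v
  -- swap the double sum
  have hswap : ∑ v, ∑ u ∈ closedNbr G v, f u = ∑ u, ((G.degree u : ℤ) + 1) * f u := by
    have h3 : ∀ v : V, ∑ u ∈ closedNbr G v, f u
        = ∑ u, (if u ∈ closedNbr G v then f u else 0) := by
      intro v
      rw [Finset.sum_ite_mem, Finset.univ_inter]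
    simp_rw [h3]
    rw [Finset.sum_comm]
    congr 1
    ext u
    have h4 : ∀ v : V, (if u ∈ closedNbr G v then f u else 0)
        = (if v ∈ closedNbr G u then f u else 0) := by
      intro v
      simp [mem_closedNbr_comm]
    simp_rw [h4]
    rw [Finset.sum_ite_mem, Finset.univ_inter, Finset.sum_const, nsmul_eq_mul,
      closedNbr_card]
    push_cast
    ring
  -- bound on sum over M
  have hMbound : (M.card : ℤ) * (G.minDegree + 1) ≤ ∑ u ∈ M, ((G.degree u : ℤ) + 1) := by
    calc (M.card : ℤ) * (G.minDegree + 1) = ∑ _u ∈ M, ((G.minDegree : ℤ) + 1) := by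
          rw [Finset.sum_const, nsmul_eq_mul]
      _ ≤ ∑ u ∈ M, ((G.degree u : ℤ) + 1) := by
          apply Finset.sum_le_sum
          intro u _
          have := G.minDegree_le_degree u
          push_cast
          omega
  -- total degree sum
  have hdeg : ∑ u, ((G.degree u : ℤ) + 1) = 2 * G.edgeFinset.card + Fintype.card V := by
    have h := G.sum_degrees_eq_twice_card_edges
    have h2 : (∑ u : V, (G.degree u : ℤ)) = 2 * G.edgeFinset.card := by exact_mod_cast h
    rw [Finset.sum_add_distrib, Finset.sum_const, nsmul_eq_mul, mul_one, Finset.card_univ, h2]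
  -- weight
  have hw : ∑ v, f v = (Fintype.card V : ℤ) - 2 * M.card := by
    have := split (fun _ => 1)
    simpa using this
  have hS2 := split (fun u => (G.degree u : ℤ) + 1)
  rw [hswap] at hS
  have hS3 : ∑ u, ((G.degree u : ℤ) + 1) * f u
      = 2 * G.edgeFinset.card + Fintype.card V - 2 * ∑ u ∈ M, ((G.degree u : ℤ) + 1) := by
    rw [hS2, hdeg]
  rw [hS3] at hS
  rw [hw]
  nlinarith [hMbound, hS]

/-- For a finite simple connected graph `G` of order `n`, size `m`,
minimum degree `δ` and `n_e` even-degree vertices,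
`γ^NN_s(G) ≥ (nδ + n_e - 2m)/(δ + 1)`. -/
theorem gammaNNs_lower_bound_3 {V : Type*} [Fintype V] [DecidableEq V]
    (G : SimpleGraph V) [DecidableRel G.Adj] (hconn : G.Connected)
    (n m nₑ δ : ℕ) (hn : n = Fintype.card V) (hm : m = G.edgeFinset.card)
    (hδ : δ = G.minDegree)
    (hne : nₑ = (univ.filter fun v => Even (G.degree v)).card) :
    ((n : ℝ) * δ + nₑ - 2 * (m : ℝ)) / ((δ : ℝ) + 1) ≤ (gammaNNs G : ℝ) := by
  classical
  set S : Set ℤ := {w : ℤ | ∃ f : V → ℤ, IsNNSDF G f ∧ w = ∑ v, f v} with hSdef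
  have hSne : S.Nonempty := by
    refine ⟨∑ _v : V, (1 : ℤ), fun _ => 1, ⟨fun v => Or.inl rfl, fun v => by simp⟩, rfl⟩
  have hbdd : BddBelow S := by
    refine ⟨-(Fintype.card V : ℤ), ?_⟩
    rintro w ⟨f, hf, rfl⟩
    calc -(Fintype.card V : ℤ) = ∑ _v : V, (-1 : ℤ) := by simp
      _ ≤ ∑ v, f v := by
          apply Finset.sum_le_sum
          intro v _
          rcases hf.1 v with h | h <;> omega
  have hmem : gammaNNs G ∈ S := Int.csInf_mem hSne hbdd
  obtain ⟨f, hf, hfw⟩ := hmem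
  have key := key_ineq G f hf
  rw [← hfw] at key
  rw [div_le_iff₀ (by positivity)]
  have : ((n : ℝ) * δ + nₑ - 2 * m : ℝ) ≤ (gammaNNs G : ℝ) * (δ + 1) := by
    rw [hn, hm, hδ, hne]
    have keyR : ((Fintype.card V : ℝ) * G.minDegree
        + ((univ.filter fun v => Even (G.degree v)).card : ℝ) - 2 * (G.edgeFinset.card : ℝ))
        ≤ ((G.minDegree : ℝ) + 1) * (gammaNNs G : ℝ) := by exact_mod_cast key
    push_cast
    linarith
  exact this
end

section
/- Let r ≥ 1 and let G be a connected r-regular finite simple graph of order n. If r is even, then γ^NN_s(G) ≥ n/(r + 1). -/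
open Finset

lemma card_closedNbr {V : Type*} [Fintype V] [DecidableEq V] (G : SimpleGraph V)
    [DecidableRel G.Adj] {r : ℕ} (hreg : G.IsRegularOfDegree r) (v : V) :
    (closedNbr G v).card = r + 1 := by
  rw [closedNbr, card_insert_of_notMem (G.notMem_neighborFinset_self v),
    G.card_neighborFinset_eq_degree, hreg v]

lemma key_bound {V : Type*} [Fintype V] [DecidableEq V]
    (G : SimpleGraph V) [DecidableRel G.Adj]
    (r : ℕ) (hreg : G.IsRegularOfDegree r) (hrEven : Even r)
    (f : V → ℤ) (hf : IsNNSDF G f) :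
    (Fintype.card V : ℤ) ≤ (r + 1) * ∑ v, f v := by
  obtain ⟨hpm, hnn⟩ := hf
  -- each closed-neighborhood sum is ≥ 1
  have h1 : ∀ v, 1 ≤ ∑ u ∈ closedNbr G v, f u := by
    intro v
    have hmod : (∑ u ∈ closedNbr G v, f u) % 2 = 1 := by
      rw [Finset.sum_int_mod]
      have : ∀ u ∈ closedNbr G v, f u % 2 = 1 := by
        intro u _; rcases hpm u with h | h <;> simp [h]
      rw [Finset.sum_congr rfl this, Finset.sum_const, card_closedNbr G hreg,
        nsmul_eq_mul, mul_one]
      obtain ⟨k, hk⟩ := hrEven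
      subst hk
      push_cast
      omega
    have := hnn v
    omega
  -- sum the inequalities
  have hsum : ∑ v : V, (1 : ℤ) ≤ ∑ v : V, ∑ u ∈ closedNbr G v, f u :=
    Finset.sum_le_sum fun v _ => h1 v
  rw [Finset.sum_const, card_univ, nsmul_eq_mul, mul_one] at hsum
  -- double counting
  have hdc : ∑ v : V, ∑ u ∈ closedNbr G v, f u = (r + 1) * ∑ v, f v := by
    calc ∑ v : V, ∑ u ∈ closedNbr G v, f u
        = ∑ v : V, ∑ u : V, if u ∈ closedNbr G v then f u else 0 := by
          refine Finset.sum_congr rfl fun v _ => ?_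
          rw [Finset.sum_ite_mem, univ_inter]
      _ = ∑ u : V, ∑ v : V, if u ∈ closedNbr G v then f u else 0 := Finset.sum_comm
      _ = ∑ u : V, ∑ v : V, if v ∈ closedNbr G u then f u else 0 := by
          refine Finset.sum_congr rfl fun u _ => Finset.sum_congr rfl fun v _ =>
            if_congr (mem_closedNbr_comm G u v) rfl rfl
      _ = ∑ u : V, ∑ v ∈ closedNbr G u, f u := by
          refine Finset.sum_congr rfl fun u _ => ?_
          rw [Finset.sum_ite_mem, univ_inter]
      _ = ∑ u : V, (r + 1 : ℤ) * f u := by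
          refine Finset.sum_congr rfl fun u _ => ?_
          rw [Finset.sum_const, card_closedNbr G hreg, nsmul_eq_mul]
          push_cast; ring
      _ = (r + 1) * ∑ v, f v := by rw [Finset.mul_sum]
  rw [hdc] at hsum
  exact hsum

/-- For `r ≥ 1` even and a connected `r`-regular finite simple graph `G` of
order `n`, `γ^NN_s(G) ≥ n/(r + 1)`. -/
theorem gammaNNs_regular_even {V : Type*} [Fintype V] [DecidableEq V]
    (G : SimpleGraph V) [DecidableRel G.Adj] (hconn : G.Connected)
    (r : ℕ) (hr : 1 ≤ r) (hreg : G.IsRegularOfDegree r) (hrEven : Even r)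
    : (Fintype.card V : ℝ) / ((r : ℝ) + 1) ≤ (gammaNNs G : ℝ) := by
  set S : Set ℤ := {w : ℤ | ∃ f : V → ℤ, IsNNSDF G f ∧ w = ∑ v, f v} with hS
  have hne : S.Nonempty := by
    refine ⟨∑ v : V, (1 : ℤ), fun _ => 1, ⟨fun v => Or.inl rfl, fun v => by positivity⟩, rfl⟩
  have hbd : ∀ w ∈ S, (Fintype.card V : ℤ) ≤ (r + 1) * w := by
    rintro w ⟨f, hf, rfl⟩
    exact key_bound G r hreg hrEven f hf
  have hbdd : BddBelow S := by
    refine ⟨0, fun w hw => ?_⟩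
    have := hbd w hw
    have hn : (0 : ℤ) ≤ Fintype.card V := Int.natCast_nonneg _
    nlinarith [Int.natCast_nonneg r]
  have hmem : sInf S ∈ S := Int.csInf_mem hne hbdd
  have hkey : (Fintype.card V : ℤ) ≤ (r + 1) * sInf S := hbd _ hmem
  have hgamma : gammaNNs G = sInf S := rfl
  rw [hgamma, div_le_iff₀ (by positivity)]
  have : ((Fintype.card V : ℤ) : ℝ) ≤ (((r : ℤ) + 1) * sInf S : ℤ) := by exact_mod_cast hkey
  push_cast at this ⊢
  linarith
end

section
/- Let G be a finite simple graph, let f : V → {−1, 1} be any function, let P = {v ∈ V : f(v) = 1}, M = {v ∈ V : f(v) = −1}, C_f = {v ∈ V : ∑_{u ∈ N[v]} f(u) ≥ 0}, P₁ = P ∩ C_f and M₁ = M ∩ C_f. Then ∑_{v ∈ P} deg_G(v) + |P₁| ≥ ∑_{v ∈ P₁ ∪ M₁} ⌈(deg_G(v) + 1)/2⌉. -/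
open Finset

/-- For any `f : V → {-1, 1}` on a finite simple graph `G`, with
`P = {v : f v = 1}`, `M = {v : f v = -1}`, `C_f = {v : ∑_{u ∈ N[v]} f(u) ≥ 0}`,
`P₁ = P ∩ C_f` and `M₁ = M ∩ C_f`, we have
`∑_{v ∈ P} deg(v) + |P₁| ≥ ∑_{v ∈ P₁ ∪ M₁} ⌈(deg(v) + 1)/2⌉`. -/
theorem lemma_kNN {V : Type*} [Fintype V] [DecidableEq V]
    (G : SimpleGraph V) [DecidableRel G.Adj]
    (f : V → ℤ) (hf : ∀ v, f v = 1 ∨ f v = -1)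
    (P M Cf P₁ M₁ : Finset V)
    (hP : P = univ.filter fun v => f v = 1)
    (hM : M = univ.filter fun v => f v = -1)
    (hCf : Cf = univ.filter fun v => 0 ≤ ∑ u ∈ closedNbr G v, f u)
    (hP₁ : P₁ = P ∩ Cf) (hM₁ : M₁ = M ∩ Cf) :
    ∑ v ∈ P₁ ∪ M₁, ⌈((G.degree v : ℚ) + 1) / 2⌉ ≤
      ∑ v ∈ P, (G.degree v : ℤ) + P₁.card := by
  classical
  set A := P₁ ∪ M₁ with hA
  have hcardN : ∀ v, (closedNbr G v).card = G.degree v + 1 := by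
    intro v
    rw [closedNbr, card_insert_of_notMem (by simp), G.card_neighborFinset_eq_degree]
  have memsym : ∀ u v : V, u ∈ closedNbr G v ↔ v ∈ closedNbr G u := by
    intro u v
    simp only [closedNbr, mem_insert, SimpleGraph.mem_neighborFinset]
    rw [G.adj_comm, eq_comm]
  -- Step 1: pointwise bound on A
  have step1 : ∀ v ∈ A, ⌈((G.degree v : ℚ) + 1) / 2⌉ ≤ ((closedNbr G v ∩ P).card : ℤ) := by
    intro v hv
    have hvC : v ∈ Cf := by
      rw [hA, hP₁, hM₁] at hv
      simp only [mem_union, mem_inter] at hv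
      tauto
    rw [hCf, mem_filter] at hvC
    have hsum : 0 ≤ ∑ u ∈ closedNbr G v, f u := hvC.2
    set N := closedNbr G v with hN
    have hPfil : N ∩ P = N.filter (fun u => f u = 1) := by
      ext u; simp [hP]
    have hsum_eq : ∑ u ∈ N, f u =
        ((N.filter (fun u => f u = 1)).card : ℤ)
          - ((N.filter (fun u => ¬ f u = 1)).card : ℤ) := by
      rw [← Finset.sum_filter_add_sum_filter_not N (fun u => f u = 1)]
      have h1 : ∑ u ∈ N.filter (fun u => f u = 1), f u
          = ((N.filter (fun u => f u = 1)).card : ℤ) := by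
        rw [Finset.sum_congr rfl (fun u hu => (mem_filter.mp hu).2)]
        simp
      have h2 : ∑ u ∈ N.filter (fun u => ¬ f u = 1), f u
          = -((N.filter (fun u => ¬ f u = 1)).card : ℤ) := by
        rw [Finset.sum_congr rfl (g := fun _ => (-1 : ℤ)) (fun u hu => by
          rcases hf u with h | h
          · exact absurd h (mem_filter.mp hu).2
          · exact h)]
        simp
      rw [h1, h2]; ring
    have hcards : (N.filter (fun u => f u = 1)).card
        + (N.filter (fun u => ¬ f u = 1)).card = G.degree v + 1 := by
      rw [Finset.card_filter_add_card_filter_not, hN, hcardN]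
    have h2a : (G.degree v : ℤ) + 1 ≤ 2 * ((N.filter (fun u => f u = 1)).card : ℤ) := by
      rw [hsum_eq] at hsum
      have := congrArg (fun n : ℕ => (n : ℤ)) hcards
      push_cast at this
      omega
    rw [hPfil]
    rw [Int.ceil_le]
    rw [div_le_iff₀ (by norm_num : (0:ℚ) < 2)]
    have h2a' : ((G.degree v : ℚ) + 1) ≤ 2 * ((N.filter (fun u => f u = 1)).card : ℚ) := by
      exact_mod_cast h2a
    push_cast
    linarith
  -- Step 2: double counting
  have key : ∀ (s t : Finset V),
      ∑ v ∈ s, (closedNbr G v ∩ t).card = ∑ u ∈ t, (closedNbr G u ∩ s).card := by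
    intro s t
    have hc : ∀ (s t : Finset V) (v : V),
        (closedNbr G v ∩ t).card = ∑ u ∈ t, if u ∈ closedNbr G v then 1 else 0 := by
      intro s t v
      rw [inter_comm, ← Finset.filter_mem_eq_inter, Finset.card_filter]
    simp only [hc s t, hc t s]
    rw [Finset.sum_comm]
    refine Finset.sum_congr rfl fun u _ => Finset.sum_congr rfl fun v _ => ?_
    simp [memsym u v]
  -- Step 3: per-u bound
  have step3 : ∀ u ∈ P, ((closedNbr G u ∩ A).card : ℤ)
      ≤ (G.degree u : ℤ) + if u ∈ A then 1 else 0 := by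
    intro u _
    have hsub : closedNbr G u ∩ A ⊆ insert u (G.neighborFinset u ∩ A) := by
      intro x hx
      simp only [closedNbr, mem_inter, mem_insert] at hx ⊢
      tauto
    by_cases hu : u ∈ A
    · have := Finset.card_le_card hsub
      have h1 : (insert u (G.neighborFinset u ∩ A)).card ≤ G.degree u + 1 := by
        calc (insert u (G.neighborFinset u ∩ A)).card
            ≤ (G.neighborFinset u ∩ A).card + 1 := Finset.card_insert_le _ _
          _ ≤ G.degree u + 1 := by
              have : (G.neighborFinset u ∩ A).card ≤ G.degree u := by
                rw [← G.card_neighborFinset_eq_degree]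
                exact Finset.card_le_card (Finset.inter_subset_left)
              omega
      simp only [hu, if_true]
      have := le_trans this h1
      exact_mod_cast this
    · have hsub2 : closedNbr G u ∩ A ⊆ G.neighborFinset u ∩ A := by
        intro x hx
        simp only [closedNbr, mem_inter, mem_insert] at hx ⊢
        rcases hx with ⟨hx1 | hx1, hx2⟩
        · exact absurd (hx1 ▸ hx2) hu
        · exact ⟨hx1, hx2⟩
      have : (closedNbr G u ∩ A).card ≤ G.degree u := by
        rw [← G.card_neighborFinset_eq_degree]
        exact le_trans (Finset.card_le_card hsub2) (Finset.card_le_card Finset.inter_subset_left)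
      simp only [hu, if_false]
      exact_mod_cast le_trans (Nat.cast_le.mpr this) (by simp)
  -- P ∩ A = P₁
  have hPA : P ∩ A = P₁ := by
    ext u
    simp only [hA, hP₁, hM₁, hP, hM, mem_inter, mem_union, mem_filter, mem_univ, true_and]
    constructor
    · rintro ⟨h1, (⟨_, h⟩ | ⟨h2, _⟩)⟩
      · exact ⟨h1, h⟩
      · omega
    · rintro ⟨h1, h⟩
      exact ⟨h1, Or.inl ⟨h1, h⟩⟩
  calc ∑ v ∈ A, ⌈((G.degree v : ℚ) + 1) / 2⌉
      ≤ ∑ v ∈ A, ((closedNbr G v ∩ P).card : ℤ) := Finset.sum_le_sum step1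
    _ = ∑ u ∈ P, ((closedNbr G u ∩ A).card : ℤ) := by
        rw [← Nat.cast_sum, ← Nat.cast_sum, key A P]
    _ ≤ ∑ u ∈ P, ((G.degree u : ℤ) + if u ∈ A then 1 else 0) := Finset.sum_le_sum step3
    _ = ∑ v ∈ P, (G.degree v : ℤ) + P₁.card := by
        rw [Finset.sum_add_distrib]
        congr 1
        rw [Finset.sum_boole, Finset.filter_mem_eq_inter, hPA]
end

section
/- Let G be a finite simple graph of order n with maximum degree Δ and degree sequence d₁ ≤ d₂ ≤ ⋯ ≤ d_n, and let 1 ≤ k ≤ n be a positive integer. Then γ^NN_{ks}(G) ≥ (2 ∑_{i=1}^{k} ⌈(d_i + 1)/2⌉)/(Δ + 1) − n. -/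
/-! If `f` has weight `w` and `P = f⁻¹(1)`, then `w = 2|P| - n`. A vertex `v` whose closed
neighbourhood sum is nonnegative has at least `⌈(deg v + 1)/2⌉` vertices of `P` in `N[v]`.
Summing over `k` such vertices, and comparing with the `k` smallest degrees, bounds
`∑_{i<k} ⌈(dᵢ + 1)/2⌉` by `∑_v |N[v] ∩ P| = ∑_{u ∈ P} (deg u + 1) ≤ |P|(Δ + 1)`. -/

open Finset

/-- `f` is a nonnegative signed `k`-subdominating function of `G`:
`f : V → {-1, 1}` and `∑_{u ∈ N[v]} f(u) ≥ 0` for at least `k` vertices `v`. -/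
def IsNNSkSDF {V : Type*} [Fintype V] [DecidableEq V] (G : SimpleGraph V) [DecidableRel G.Adj]
    (k : ℕ) (f : V → ℤ) : Prop :=
  (∀ v, f v = 1 ∨ f v = -1) ∧
    k ≤ (univ.filter fun v => 0 ≤ ∑ u ∈ closedNbr G v, f u).card

/-- The nonnegative signed `k`-subdomination number `γ^NN_{ks}(G)`. -/
noncomputable def gammaNNks {V : Type*} [Fintype V] [DecidableEq V] (G : SimpleGraph V)
    [DecidableRel G.Adj] (k : ℕ) : ℤ :=
  sInf {w : ℤ | ∃ f : V → ℤ, IsNNSkSDF G k f ∧ w = ∑ v, f v}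

theorem Multiset.sum_range_card_le_sum_of_le_map_range {α : Type*} [AddCommMonoid α]
    [PartialOrder α] [IsOrderedAddMonoid α] {c : ℕ → α} {n : ℕ}
    (hc : MonotoneOn c (Set.Iio n)) {s : Multiset α} (hs : s ≤ (Multiset.range n).map c) :
    ∑ i ∈ Finset.range (Multiset.card s), c i ≤ s.sum := by
  classical
  induction n generalizing s with
  | zero =>
    obtain rfl : s = 0 := Multiset.le_zero.mp (by simpa using hs)
    simp
  | succ n ih =>
    have hc' : MonotoneOn c (Set.Iio n) :=
      hc.mono (Set.Iio_subset_Iio (Nat.le_succ n))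
    rw [Multiset.range_succ, Multiset.map_cons] at hs
    by_cases hn : c n ∈ s
    · have hle : s.erase (c n) ≤ (Multiset.range n).map c := Multiset.erase_le_iff_le_cons.mpr hs
      have hcard : Multiset.card (s.erase (c n)) ≤ n := by
        simpa using Multiset.card_le_card hle
      rw [← Multiset.cons_erase hn, Multiset.card_cons, Multiset.sum_cons, sum_range_succ,
        add_comm (c n)]
      exact add_le_add (ih hc' hle)
        (hc (Set.mem_Iio.mpr (by omega)) (Set.mem_Iio.mpr n.lt_succ_self) hcard)
    · exact ih hc' ((Multiset.le_cons_of_notMem hn).mp hs)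

theorem Finset.sum_eq_two_mul_card_filter_sub_card {α : Type*} {f : α → ℤ}
    (hf : ∀ a, f a = 1 ∨ f a = -1) (s : Finset α) :
    ∑ a ∈ s, f a = 2 * #{a ∈ s | f a = 1} - #s := by
  classical
  have hf' : ∀ a, f a = 2 * (if f a = 1 then 1 else 0) - 1 := fun a => by
    rcases hf a with h | h <;> simp [h]
  rw [sum_congr rfl fun a _ => hf' a, sum_sub_distrib, ← mul_sum, sum_boole]
  simp

theorem Finset.sum_range_card_le_sum {ι α : Type*} [Fintype ι] [AddCommMonoid α]
    [PartialOrder α] [IsOrderedAddMonoid α] {c : ℕ → α} {n : ℕ}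
    (hc : MonotoneOn c (Set.Iio n)) {e : ι → α}
    (he : (univ : Finset ι).val.map e = (range n).val.map c) (B : Finset ι) :
    ∑ i ∈ range #B, c i ≤ ∑ v ∈ B, e v := by
  have hB : B.val.map e ≤ (Multiset.range n).map c :=
    he ▸ Multiset.map_le_map (val_le_iff.mpr (subset_univ B))
  simpa using Multiset.sum_range_card_le_sum_of_le_map_range hc hB

namespace SimpleGraph

variable {V : Type*} [Fintype V] [DecidableEq V] (G : SimpleGraph V) [DecidableRel G.Adj]

theorem card_closedNbr (v : V) : #(closedNbr G v) = G.degree v + 1 := by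
  rw [closedNbr, card_insert_of_notMem (by simp), card_neighborFinset_eq_degree]

theorem mem_closedNbr_comm {u v : V} : u ∈ closedNbr G v ↔ v ∈ closedNbr G u := by
  simp only [closedNbr, mem_insert, mem_neighborFinset, adj_comm, eq_comm]

theorem sum_card_closedNbr_inter (P : Finset V) :
    ∑ v, #(closedNbr G v ∩ P) = ∑ u ∈ P, (G.degree u + 1) := by
  let r : V → V → Prop := fun u v => v ∈ closedNbr G u
  calc ∑ v, #(closedNbr G v ∩ P) = ∑ v, #(P.bipartiteBelow r v) := by
        congr! 2 with v
        ext u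
        simp [r, bipartiteBelow, G.mem_closedNbr_comm (u := v), and_comm]
    _ = ∑ u ∈ P, #(univ.bipartiteAbove r u) :=
        (sum_card_bipartiteAbove_eq_sum_card_bipartiteBelow r).symm
    _ = ∑ u ∈ P, (G.degree u + 1) := by simp [r, bipartiteAbove, card_closedNbr]

theorem sum_card_closedNbr_inter_le (P : Finset V) :
    ∑ v, #(closedNbr G v ∩ P) ≤ #P * (G.maxDegree + 1) := by
  rw [sum_card_closedNbr_inter, card_eq_sum_ones, sum_mul, one_mul]
  exact sum_le_sum fun u _ => Nat.add_le_add_right (G.degree_le_maxDegree u) 1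

end SimpleGraph

section Subdomination

variable {V : Type*} [Fintype V] [DecidableEq V] {G : SimpleGraph V} [DecidableRel G.Adj]
  {k : ℕ}

theorem isNNSkSDF_one (hk : k ≤ Fintype.card V) : IsNNSkSDF G k 1 := by
  refine ⟨fun _ => Or.inl rfl, ?_⟩
  simpa [filter_true_of_mem] using hk

theorem IsNNSkSDF.neg_card_le_sum {f : V → ℤ} (hf : IsNNSkSDF G k f) :
    -(Fintype.card V : ℤ) ≤ ∑ v, f v := by
  have h : ∀ v, -1 ≤ f v := fun v => by rcases hf.1 v with h | h <;> omega
  simpa using sum_le_sum fun v (_ : v ∈ univ) => h v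

theorem exists_isNNSkSDF_sum_eq_gammaNNks (hk : k ≤ Fintype.card V) :
    ∃ f, IsNNSkSDF G k f ∧ ∑ v, f v = gammaNNks G k := by
  obtain ⟨f, hf, hsum⟩ := Int.csInf_mem (s := {w : ℤ | ∃ f, IsNNSkSDF G k f ∧ w = ∑ v, f v})
    ⟨_, 1, isNNSkSDF_one hk, rfl⟩
    ⟨_, by rintro _ ⟨f, hf, rfl⟩; exact hf.neg_card_le_sum⟩
  exact ⟨f, hf, hsum.symm⟩

theorem ceil_half_succ_degree_le_card_closedNbr_inter {f : V → ℤ}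
    (hf : ∀ v, f v = 1 ∨ f v = -1) {v : V} (hv : 0 ≤ ∑ u ∈ closedNbr G v, f u) :
    ⌈((G.degree v : ℚ) + 1) / 2⌉ ≤ #(closedNbr G v ∩ ({u | f u = 1} : Finset V)) := by
  have hfilter : closedNbr G v ∩ ({u | f u = 1} : Finset V) = {u ∈ closedNbr G v | f u = 1} := by
    ext; simp
  rw [sum_eq_two_mul_card_filter_sub_card hf, G.card_closedNbr] at hv
  rw [hfilter, Int.ceil_le, div_le_iff₀ two_pos]
  push_cast at hv
  exact_mod_cast (by linarith : (G.degree v : ℤ) + 1 ≤ #{u ∈ closedNbr G v | f u = 1} * 2)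

theorem IsNNSkSDF.two_mul_sum_range_ceil_le {f : V → ℤ} (hf : IsNNSkSDF G k f) {n : ℕ}
    {d : ℕ → ℕ} (hd : MonotoneOn d (Set.Iio n))
    (hseq : (univ : Finset V).val.map (fun v => G.degree v) = (range n).val.map d) :
    2 * ∑ i ∈ range k, ⌈((d i : ℚ) + 1) / 2⌉ ≤
      (∑ v, f v + Fintype.card V) * (G.maxDegree + 1) := by
  set P : Finset V := {u | f u = 1}
  obtain ⟨B, hB_good, hB_card⟩ := exists_subset_card_eq hf.2
  have hc : MonotoneOn (fun i => ⌈((d i : ℚ) + 1) / 2⌉) (Set.Iio n) :=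
    fun i hi j hj hij => Int.ceil_mono (by gcongr; exact hd hi hj hij)
  have he : (univ : Finset V).val.map (fun v => ⌈((G.degree v : ℚ) + 1) / 2⌉) =
      (range n).val.map (fun i => ⌈((d i : ℚ) + 1) / 2⌉) := by
    simpa [Multiset.map_map] using congrArg (Multiset.map fun m : ℕ => ⌈((m : ℚ) + 1) / 2⌉) hseq
  have hweight : ∑ v, f v + Fintype.card V = 2 * #P := by
    rw [sum_eq_two_mul_card_filter_sub_card hf.1, card_univ]; ring
  calc 2 * ∑ i ∈ range k, ⌈((d i : ℚ) + 1) / 2⌉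
      ≤ 2 * ∑ v ∈ B, ⌈((G.degree v : ℚ) + 1) / 2⌉ := by
        rw [← hB_card]; gcongr; exact sum_range_card_le_sum hc he B
    _ ≤ 2 * ∑ v ∈ B, (#(closedNbr G v ∩ P) : ℤ) := by
        gcongr with v hv
        exact ceil_half_succ_degree_le_card_closedNbr_inter hf.1 (mem_filter.1 (hB_good hv)).2
    _ ≤ 2 * ∑ v, (#(closedNbr G v ∩ P) : ℤ) := by
        gcongr
        exact subset_univ B
    _ ≤ 2 * (#P * (G.maxDegree + 1)) := by
        exact_mod_cast Nat.mul_le_mul_left 2 (G.sum_card_closedNbr_inter_le P)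
    _ = (∑ v, f v + Fintype.card V) * (G.maxDegree + 1) := by rw [hweight]; ring

end Subdomination

theorem gammaNNks_lower_bound_1_general {V : Type*} [Fintype V] [DecidableEq V]
    (G : SimpleGraph V) [DecidableRel G.Adj]
    (n k Δ : ℕ) (hn : n = Fintype.card V) (hΔ : Δ = G.maxDegree)
    (hk2 : k ≤ n)
    (d : ℕ → ℕ) (hmono : ∀ i j, i ≤ j → j < n → d i ≤ d j)
    (hseq : (univ : Finset V).val.map (fun v => G.degree v) = (Finset.range n).val.map d) :
    (2 * ∑ i ∈ Finset.range k, (⌈((d i : ℚ) + 1) / 2⌉ : ℝ)) / ((Δ : ℝ) + 1) - n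
      ≤ (gammaNNks G k : ℝ) := by
  obtain ⟨f, hf, hf_sum⟩ := exists_isNNSkSDF_sum_eq_gammaNNks (G := G) (hn ▸ hk2)
  have hd : MonotoneOn d (Set.Iio n) := fun i _ j hj hij => hmono i j hij hj
  have key := hf.two_mul_sum_range_ceil_le hd hseq
  rw [hf_sum, ← hn, ← hΔ] at key
  rw [sub_le_iff_le_add, div_le_iff₀ (by positivity)]
  exact_mod_cast key

/-- For a finite simple graph `G` of order `n` with maximum degree `Δ`,
degree sequence `d 0 ≤ d 1 ≤ ⋯ ≤ d (n-1)` and `1 ≤ k ≤ n`,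
`γ^NN_{ks}(G) ≥ (2 ∑_{i<k} ⌈(d i + 1)/2⌉)/(Δ + 1) - n`. -/
theorem gammaNNks_lower_bound_1 {V : Type*} [Fintype V] [DecidableEq V]
    (G : SimpleGraph V) [DecidableRel G.Adj]
    (n k Δ : ℕ) (hn : n = Fintype.card V) (hΔ : Δ = G.maxDegree)
    (hk1 : 1 ≤ k) (hk2 : k ≤ n)
    (d : ℕ → ℕ) (hmono : ∀ i j, i ≤ j → j < n → d i ≤ d j)
    (hseq : (univ : Finset V).val.map (fun v => G.degree v) = (Finset.range n).val.map d) :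
    (2 * ∑ i ∈ Finset.range k, (⌈((d i : ℚ) + 1) / 2⌉ : ℝ)) / ((Δ : ℝ) + 1) - n
      ≤ (gammaNNks G k : ℝ) :=
  gammaNNks_lower_bound_1_general G n k Δ hn hΔ hk2 d hmono hseq
end

section
/- Let t be a positive integer and let G be the graph obtained from a cycle C_{2t} on vertices v₁, …, v_{2t} by adding, for each edge v_i v_{i+1} of the cycle (indices modulo 2t), a new vertex u_i adjacent to both v_i and v_{i+1}. Then γ^NN_s(G) = 0. -/
open Finset

/-- The graph obtained from the cycle `C_{2t}` (on vertices `v_i = Sum.inl i`, `i ∈ ZMod (2t)`,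
with `v_i` adjacent to `v_{i+1}`) by adding, for each cycle edge `v_i v_{i+1}`, a new vertex
`u_i = Sum.inr i` adjacent exactly to `v_i` and `v_{i+1}` (indices modulo `2t`). -/
def cycleWithEars (t : ℕ) : SimpleGraph (ZMod (2 * t) ⊕ ZMod (2 * t)) :=
  SimpleGraph.fromRel fun x y =>
    match x, y with
    | Sum.inl i, Sum.inl j => j = i + 1
    | Sum.inr i, Sum.inl j => j = i ∨ j = i + 1
    | _, _ => False

noncomputable instance (t : ℕ) : DecidableRel (cycleWithEars t).Adj :=
  fun _ _ => Classical.dec _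

/-! The weight `0` is attained by `+1` on the cycle and `-1` on the ears: every closed
neighbourhood contains at least two cycle vertices and at most two ears.

Conversely, the closed neighbourhood of the ear `uᵢ` is `{uᵢ, vᵢ, vᵢ₊₁}`, and a nonnegative sum of
three signs is at least `1`. Summing over `i` counts every cycle vertex twice:
`∑ f(u) + 2 ∑ f(v) ≥ 2t ≥ ∑ f(v)`, so the weight `∑ f(u) + ∑ f(v)` is nonnegative. -/

lemma mem_closedNbr {V : Type*} [Fintype V] [DecidableEq V] {G : SimpleGraph V}
    [DecidableRel G.Adj] {u v : V} : u ∈ closedNbr G v ↔ u = v ∨ G.Adj v u := by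
  simp [closedNbr]

lemma gammaNNs_eq_of_isNNSDF {V : Type*} [Fintype V] [DecidableEq V] {G : SimpleGraph V}
    [DecidableRel G.Adj] {f₀ : V → ℤ} {w : ℤ} (hf₀ : IsNNSDF G f₀) (hw : ∑ v, f₀ v = w)
    (hmin : ∀ f, IsNNSDF G f → w ≤ ∑ v, f v) : gammaNNs G = w :=
  IsLeast.csInf_eq ⟨⟨f₀, hf₀, hw.symm⟩, by rintro _ ⟨f, hf, rfl⟩; exact hmin f hf⟩

lemma one_le_add_add_of_sign {a b c : ℤ} (ha : a = 1 ∨ a = -1) (hb : b = 1 ∨ b = -1)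
    (hc : c = 1 ∨ c = -1) (h : 0 ≤ a + b + c) : 1 ≤ a + b + c := by
  omega

lemma sum_elim_one_neg_one {α : Type*} [Fintype α] :
    ∑ v, Sum.elim (1 : α → ℤ) (-1 : α → ℤ) v = 0 := by
  simp [Fintype.sum_sum_type]

namespace cycleWithEars

open SimpleGraph Sum

variable {t : ℕ}

@[simp] lemma adj_inl_inl {i j : ZMod (2 * t)} :
    (cycleWithEars t).Adj (inl i) (inl j) ↔ i ≠ j ∧ (j = i + 1 ∨ i = j + 1) := by
  simp [cycleWithEars]

@[simp] lemma adj_inr_inl {i j : ZMod (2 * t)} :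
    (cycleWithEars t).Adj (inr i) (inl j) ↔ j = i ∨ j = i + 1 := by
  simp [cycleWithEars]

@[simp] lemma adj_inl_inr {i j : ZMod (2 * t)} :
    (cycleWithEars t).Adj (inl j) (inr i) ↔ j = i ∨ j = i + 1 := by
  simp [cycleWithEars]

@[simp] lemma not_adj_inr_inr {i j : ZMod (2 * t)} : ¬(cycleWithEars t).Adj (inr i) (inr j) := by
  simp [cycleWithEars]

variable [NeZero t]

lemma self_ne_add_one (i : ZMod (2 * t)) : i ≠ i + 1 := by
  have : Nontrivial (ZMod (2 * t)) := ZMod.nontrivial_iff.2 (by have := NeZero.ne t; omega)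
  simp

lemma closedNbr_inr (i : ZMod (2 * t)) :
    closedNbr (cycleWithEars t) (inr i) = {inr i, inl i, inl (i + 1)} := by
  ext (j | j) <;> simp [mem_closedNbr, eq_comm]

lemma sum_closedNbr_inr (f : ZMod (2 * t) ⊕ ZMod (2 * t) → ℤ) (i : ZMod (2 * t)) :
    ∑ u ∈ closedNbr (cycleWithEars t) (inr i), f u = f (inr i) + f (inl i) + f (inl (i + 1)) := by
  rw [closedNbr_inr, sum_insert (by simp), sum_pair (by simpa using self_ne_add_one i), add_assoc]

lemma two_le_card_toLeft_closedNbr (v : ZMod (2 * t) ⊕ ZMod (2 * t)) :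
    2 ≤ #(closedNbr (cycleWithEars t) v).toLeft := by
  obtain ⟨j, hj⟩ : ∃ j : ZMod (2 * t), {j, j + 1} ⊆ (closedNbr (cycleWithEars t) v).toLeft := by
    rcases v with j | j <;> refine ⟨j, ?_⟩ <;> simp [insert_subset_iff, mem_closedNbr, em]
  simpa [card_pair (self_ne_add_one j)] using card_le_card hj

lemma card_toRight_closedNbr_le_two (v : ZMod (2 * t) ⊕ ZMod (2 * t)) :
    #(closedNbr (cycleWithEars t) v).toRight ≤ 2 := by
  obtain ⟨j, hj⟩ : ∃ j : ZMod (2 * t), (closedNbr (cycleWithEars t) v).toRight ⊆ {j, j - 1} := by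
    rcases v with j | j <;> refine ⟨j, fun i => ?_⟩ <;>
      simp [mem_closedNbr, eq_sub_iff_add_eq, eq_comm]
    exact Or.inl
  exact (card_le_card hj).trans card_le_two

lemma isNNSDF_elim_one_neg_one :
    IsNNSDF (cycleWithEars t) (Sum.elim 1 (-1)) := by
  refine ⟨by rintro (i | i) <;> simp, fun v => ?_⟩
  rw [sum_sum_eq_sum_toLeft_add_sum_toRight]
  simp only [Sum.elim_inl, Sum.elim_inr, Pi.one_apply, Pi.neg_apply, sum_const, nsmul_eq_mul,
    mul_one, mul_neg]
  have := two_le_card_toLeft_closedNbr v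
  have := card_toRight_closedNbr_le_two v
  omega

lemma sum_nonneg_of_isNNSDF {f : ZMod (2 * t) ⊕ ZMod (2 * t) → ℤ}
    (hf : IsNNSDF (cycleWithEars t) f) : 0 ≤ ∑ v, f v := by
  obtain ⟨hsign, hdom⟩ := hf
  have hear (i : ZMod (2 * t)) : 1 ≤ f (inr i) + f (inl i) + f (inl (i + 1)) :=
    one_le_add_add_of_sign (hsign _) (hsign _) (hsign _) (sum_closedNbr_inr f i ▸ hdom (inr i))
  have hcycle (i : ZMod (2 * t)) : f (inl i) ≤ 1 := by rcases hsign (inl i) with h | h <;> omega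
  have hshift : ∑ i, f (inl (i + 1)) = ∑ i, f (inl i) :=
    Equiv.sum_comp (Equiv.addRight 1) (f ∘ inl)
  have hears := sum_le_sum fun i (_ : i ∈ univ) => hear i
  have hcycles := sum_le_sum fun i (_ : i ∈ univ) => hcycle i
  simp only [sum_add_distrib, hshift] at hears
  rw [Fintype.sum_sum_type]
  linarith

end cycleWithEars

/-- For a positive integer `t`, the graph obtained from `C_{2t}` by adding a
vertex adjacent to both endpoints of each cycle edge has `γ^NN_s(G) = 0`. -/
theorem gammaNNs_cycleWithEars (t : ℕ) (ht : 1 ≤ t) :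
    haveI : NeZero (2 * t) := ⟨by omega⟩
    gammaNNs (cycleWithEars t) = 0 := by
  have : NeZero t := ⟨by omega⟩
  exact gammaNNs_eq_of_isNNSDF cycleWithEars.isNNSDF_elim_one_neg_one
    sum_elim_one_neg_one fun _ => cycleWithEars.sum_nonneg_of_isNNSDF
end

section
/- Let n ≥ 3 with n ≡ 0 (mod 3) and let C_n denote the cycle graph on n vertices. Then γ^NN_s(C_n) = n/3. -/
open Finset

lemma aux_sub_val (m : ℕ) (v : Fin (m + 3)) :
    (v - 1).val = (m + 2 + v.val) % (m + 3) := by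
  have : (v - 1).val = (m + 3 - (1 : Fin (m+3)).val + v.val) % (m+3) := by rw [Fin.sub_def]
  rw [Fin.val_one] at this
  rw [this]
  congr 1

lemma aux_add_val (m : ℕ) (v : Fin (m + 3)) :
    (v + 1).val = (v.val + 1) % (m + 3) := by
  rw [Fin.val_add, Fin.val_one]

lemma sum_closedNbr_cycle (m : ℕ) (f : Fin (m+3) → ℤ) (v : Fin (m+3)) :
    ∑ u ∈ closedNbr (SimpleGraph.cycleGraph (m+3)) v, f u = f (v-1) + f v + f (v+1) := by
  have hv := v.isLt
  have hs := aux_sub_val m v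
  have ha := aux_add_val m v
  have hsd : (m + 2 + v.val) % (m + 3) = if v.val = 0 then m + 2 else v.val - 1 := by
    split_ifs with h
    · rw [h]; exact Nat.mod_eq_of_lt (by omega)
    · have : m + 2 + v.val = (m + 3) + (v.val - 1) := by omega
      rw [this, Nat.add_mod_left]; exact Nat.mod_eq_of_lt (by omega)
  have had : (v.val + 1) % (m + 3) = if v.val = m + 2 then 0 else v.val + 1 := by
    split_ifs with h
    · rw [h]; exact Nat.mod_self _
    · exact Nat.mod_eq_of_lt (by omega)
  rw [hsd] at hs; rw [had] at ha
  have h1 : v ≠ v - 1 := by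
    rw [Ne, Fin.ext_iff]; split_ifs at hs <;> omega
  have h2 : v ≠ v + 1 := by
    rw [Ne, Fin.ext_iff]; split_ifs at ha <;> omega
  have h3 : v - 1 ≠ v + 1 := by
    rw [Ne, Fin.ext_iff]; split_ifs at hs ha <;> omega
  have hnot : v ∉ ({v - 1, v + 1} : Finset (Fin (m+3))) := by
    simp only [Finset.mem_insert, Finset.mem_singleton]
    push_neg
    exact ⟨h1, h2⟩
  unfold closedNbr
  rw [SimpleGraph.cycleGraph_neighborFinset, Finset.sum_insert hnot, Finset.sum_pair h3]
  ring

/-- For `n ≥ 3` with `n ≡ 0 (mod 3)`, the cycle `C_n` satisfies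
`γ^NN_s(C_n) = n/3`. -/
theorem gammaNNs_cycle (n : ℕ) (hn : 3 ≤ n) (h3 : n % 3 = 0) :
    (gammaNNs (SimpleGraph.cycleGraph n) : ℝ) = (n : ℝ) / 3 := by
  obtain ⟨m, rfl⟩ : ∃ m, n = m + 3 := ⟨n - 3, by omega⟩
  obtain ⟨k, hk⟩ : ∃ k, m + 3 = 3 * k := ⟨(m+3)/3, by omega⟩
  have h3d : 3 ∣ (m + 3) := by omega
  -- mod-3 values of shifted vertices
  have hsub3 : ∀ v : Fin (m+3), (v - 1).val % 3 = (v.val + 2) % 3 := by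
    intro v
    rw [aux_sub_val, Nat.mod_mod_of_dvd _ h3d]
    omega
  have hadd3 : ∀ v : Fin (m+3), (v + 1).val % 3 = (v.val + 1) % 3 := by
    intro v
    rw [aux_add_val, Nat.mod_mod_of_dvd _ h3d]
  -- shifting sums
  have e1 : ∀ f : Fin (m+3) → ℤ, ∑ v : Fin (m+3), f (v - 1) = ∑ v : Fin (m+3), f v :=
    fun f => Fintype.sum_equiv (Equiv.subRight (1 : Fin (m+3))) _ _ (fun _ => rfl)
  have e2 : ∀ f : Fin (m+3) → ℤ, ∑ v : Fin (m+3), f (v + 1) = ∑ v : Fin (m+3), f v :=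
    fun f => Fintype.sum_equiv (Equiv.addRight (1 : Fin (m+3))) _ _ (fun _ => rfl)
  -- the witness function
  set f0 : Fin (m+3) → ℤ := fun v => if v.val % 3 = 2 then -1 else 1 with hf0
  have hwin0 : ∀ v : Fin (m+3), f0 (v - 1) + f0 v + f0 (v + 1) = 1 := by
    intro v
    have hs := hsub3 v
    have ha := hadd3 v
    simp only [hf0]
    split_ifs <;> omega
  have hnnsdf : IsNNSDF (SimpleGraph.cycleGraph (m+3)) f0 := by
    constructor
    · intro v; simp only [hf0]; split_ifs <;> simp
    · intro v; rw [sum_closedNbr_cycle, hwin0]; norm_num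
  have hrange : ∀ j : ℕ, ∑ i ∈ Finset.range (3*j), (if i % 3 = 2 then (-1:ℤ) else 1) = j := by
    intro j
    induction j with
    | zero => simp
    | succ j ih =>
      have h : 3 * (j+1) = (3*j) + 1 + 1 + 1 := by ring
      rw [h, Finset.sum_range_succ, Finset.sum_range_succ, Finset.sum_range_succ, ih,
        if_neg (by omega), if_neg (by omega), if_pos (by omega : (3*j+1+1) % 3 = 2)]
      push_cast; ring
  have hweight : ∑ v : Fin (m+3), f0 v = (k : ℤ) := by
    rw [Fin.sum_univ_eq_sum_range (fun i => if i % 3 = 2 then (-1:ℤ) else 1), hk, hrange]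
  -- membership
  set S : Set ℤ := {w : ℤ | ∃ f : Fin (m+3) → ℤ,
      IsNNSDF (SimpleGraph.cycleGraph (m+3)) f ∧ w = ∑ v, f v} with hS
  have hmem : (k : ℤ) ∈ S := ⟨f0, hnnsdf, hweight.symm⟩
  -- lower bound
  have hlb : ∀ w ∈ S, (k : ℤ) ≤ w := by
    rintro w ⟨f, hf, rfl⟩
    have hwin : ∀ v : Fin (m+3), 1 ≤ f (v-1) + f v + f (v+1) := by
      intro v
      have h0 := hf.2 v
      rw [sum_closedNbr_cycle] at h0
      rcases hf.1 (v-1) with a|a <;> rcases hf.1 v with b|b <;> rcases hf.1 (v+1) with c|c <;>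
        omega
    have hbig : ((m+3 : ℕ) : ℤ) ≤ 3 * ∑ v, f v := by
      calc ((m+3 : ℕ) : ℤ) = ∑ _v : Fin (m+3), (1:ℤ) := by simp
        _ ≤ ∑ v : Fin (m+3), (f (v-1) + f v + f (v+1)) :=
            Finset.sum_le_sum fun v _ => hwin v
        _ = 3 * ∑ v, f v := by
            rw [Finset.sum_add_distrib, Finset.sum_add_distrib, e1, e2 f]; ring
    have : ((m+3 : ℕ) : ℤ) = 3 * (k : ℤ) := by exact_mod_cast congrArg Nat.cast hk
    omega
  have hinf : gammaNNs (SimpleGraph.cycleGraph (m+3)) = (k : ℤ) := by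
    unfold gammaNNs
    exact le_antisymm (csInf_le ⟨(k:ℤ), hlb⟩ hmem) (le_csInf ⟨(k:ℤ), hmem⟩ hlb)
  rw [hinf]
  have : ((m+3 : ℕ) : ℝ) = 3 * (k : ℝ) := by exact_mod_cast congrArg Nat.cast hk
  rw [this]
  push_cast
  ring
end
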